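/- arXiv:0903.1860 — 3 statements merged into one kernel-verified Lean document; each statement's English description precedes it below -/
import Mathlib

section
/- Let G be a finite group of order s and A an associative algebra over a field F of characteristic zero satisfying an ordinary polynomial identity. Then for every n ≥ 1, the n-th graded codimension satisfies c_n(A) ≤ c_n^G(A) ≤ s^n · c_n(A), where c_n(A) is the ordinary n-th codimension and c_n^G(A) is the dimension of the space of multilinear G-graded polynomials of degree n modulo the G-graded identities of A. -/
/-! The substitution `x_i ↦ ∑_g x_{i,g}` identifies `P_n` modulo `Id(A)` with a subspace of
`P_n^G` modulo `Id^G(A)`: it maps ordinary identities to graded ones, and conversely, because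
every substitution in `A` is a sum of graded substitutions when `A = ⨁_g A_g`. This gives
`c_n(A) ≤ c_n^G(A)`. For the other bound, `P_n^G` is the sum over the `s^n` degree assignments
`t` of the images of `P_n` under `x_i ↦ x_{i,t(i)}`; each such image maps ordinary identities to
graded ones, so its image modulo `Id^G(A)` has dimension at most `c_n(A)`. -/

open Module

noncomputable section

namespace GrPI

variable (F : Type) [Field F] (G : Type)

/-- The ideal (as an `F`-submodule of the free `G`-graded algebra on countably many
variables of each homogeneous degree) of `G`-graded polynomial identities of a
`G`-graded algebra `A` with grading `𝒜`.  A variable is a pair `(i, g) : ℕ × G`,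
of homogeneous degree `g`; a polynomial is a graded identity if it vanishes under
every graded substitution. -/
def gradedId (A : Type) [Ring A] [Algebra F A] (𝒜 : G → Submodule F A) :
    Submodule F (FreeAlgebra F (ℕ × G)) where
  carrier := {f | ∀ v : ℕ × G → A, (∀ p : ℕ × G, v p ∈ 𝒜 p.2) → FreeAlgebra.lift F v f = 0}
  add_mem' := by
    intro a b ha hb v hv
    simp [map_add, ha v hv, hb v hv]
  zero_mem' := by intro v hv; simp
  smul_mem' := by
    intro c a ha v hv
    simp [ha v hv]

/-- The multilinear graded monomial `x_{σ(1),g_1} ⋯ x_{σ(n),g_n}`. -/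
def gradedMonomial (n : ℕ) (σ : Equiv.Perm (Fin n)) (gs : Fin n → G) :
    FreeAlgebra F (ℕ × G) :=
  (List.ofFn fun j : Fin n => FreeAlgebra.ι F (((σ j : ℕ), gs j) : ℕ × G)).prod

/-- `P_n^G`: the space of multilinear graded polynomials in the variables
`x_{1,•}, …, x_{n,•}`. -/
def PnG (n : ℕ) : Submodule F (FreeAlgebra F (ℕ × G)) :=
  Submodule.span F
    {w | ∃ (σ : Equiv.Perm (Fin n)) (gs : Fin n → G), w = gradedMonomial F G n σ gs}

/-- The `n`-th graded codimension `c_n^G(A) = dim P_n^G/(P_n^G ∩ Id^G(A))`. -/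
def gradedCodim (A : Type) [Ring A] [Algebra F A] (𝒜 : G → Submodule F A) (n : ℕ) : ℕ :=
  finrank F ((PnG F G n).map (gradedId F G A 𝒜).mkQ)

/-- The ideal (as an `F`-submodule) of ordinary polynomial identities of `A`. -/
def ordId (A : Type) [Ring A] [Algebra F A] : Submodule F (FreeAlgebra F ℕ) where
  carrier := {f | ∀ v : ℕ → A, FreeAlgebra.lift F v f = 0}
  add_mem' := by
    intro a b ha hb v
    simp [map_add, ha v, hb v]
  zero_mem' := by intro v; simp
  smul_mem' := by
    intro c a ha v
    simp [ha v]

/-- `P_n`: the space of ordinary multilinear polynomials in `x_1, …, x_n`. -/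
def Pn (n : ℕ) : Submodule F (FreeAlgebra F ℕ) :=
  Submodule.span F
    {w | ∃ σ : Equiv.Perm (Fin n), w = (List.ofFn fun j : Fin n => FreeAlgebra.ι F (σ j : ℕ)).prod}

/-- The `n`-th ordinary codimension `c_n(A) = dim P_n/(P_n ∩ Id(A))`. -/
def ordCodim (A : Type) [Ring A] [Algebra F A] (n : ℕ) : ℕ :=
  finrank F ((Pn F n).map (ordId F A).mkQ)

/-- `𝒜 : G → Submodule F A` is a `G`-grading of the algebra `A`. -/
structure IsGrading [Monoid G] [DecidableEq G] (A : Type) [Ring A] [Algebra F A]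
    (𝒜 : G → Submodule F A) : Prop where
  one_mem : (1 : A) ∈ 𝒜 1
  mul_mem : ∀ {g h : G} {a b : A}, a ∈ 𝒜 g → b ∈ 𝒜 h → a * b ∈ 𝒜 (g * h)
  internal : DirectSum.IsInternal 𝒜

lemma prod_ofFn_sum {R H : Type*} [Semiring R] [Fintype H] :
    ∀ (n : ℕ) (b : Fin n → H → R),
      (List.ofFn fun j => ∑ g, b j g).prod = ∑ gs : Fin n → H, (List.ofFn fun j => b j (gs j)).prod
  | 0, b => by simp
  | n + 1, b => by
    rw [List.ofFn_succ, List.prod_cons, prod_ofFn_sum n fun j => b j.succ, Finset.sum_mul_sum,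
      ← Fintype.sum_prod_type', ← (Fin.consEquiv fun _ => H).sum_comp]
    simp [List.ofFn_succ, Fin.consEquiv]

lemma finrank_iSup_le_sum {K V ι : Type*} [DivisionRing K] [AddCommGroup V] [Module K V]
    [Fintype ι] (W : ι → Submodule K V) [∀ i, FiniteDimensional K (W i)] :
    finrank K ↥(⨆ i, W i) ≤ ∑ i, finrank K (W i) := by
  classical
  rw [Submodule.iSup_eq_range_dfinsupp_lsum, ← Module.finrank_directSum]
  exact LinearMap.finrank_range_le _

section Quotients

variable {K V W : Type*} [DivisionRing K] [AddCommGroup V] [Module K V] [AddCommGroup W]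
  [Module K W] (φ : V →ₗ[K] W) {I : Submodule K V} {J : Submodule K W}

lemma finrank_map_mkQ_map_le (h : I ≤ J.comap φ) (P : Submodule K V)
    [FiniteDimensional K (P.map I.mkQ)] :
    finrank K ((P.map φ).map J.mkQ) ≤ finrank K (P.map I.mkQ) := by
  rw [← Submodule.map_comp, ← Submodule.mapQ_mkQ I J φ (h := h), Submodule.map_comp]
  exact Submodule.finrank_map_le _ _

lemma finrank_map_mkQ_le_of_comap_eq (h : J.comap φ = I) {P : Submodule K V}
    {Q : Submodule K W} (hPQ : P.map φ ≤ Q) [FiniteDimensional K (Q.map J.mkQ)] :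
    finrank K (P.map I.mkQ) ≤ finrank K (Q.map J.mkQ) := by
  have hinj : Function.Injective (I.mapQ J φ h.ge) := by
    rw [← LinearMap.ker_eq_bot, Submodule.ker_mapQ, h, Submodule.mkQ_map_self]
  calc finrank K (P.map I.mkQ)
      = finrank K ((P.map I.mkQ).map (I.mapQ J φ h.ge)) :=
        LinearEquiv.finrank_eq (Submodule.equivMapOfInjective _ hinj _)
    _ = finrank K ((P.map φ).map J.mkQ) := by
        rw [← Submodule.map_comp, Submodule.mapQ_mkQ, Submodule.map_comp]
    _ ≤ finrank K (Q.map J.mkQ) := Submodule.finrank_mono (Submodule.map_mono hPQ)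

end Quotients

lemma lift_lift_apply {R X Y B : Type*} [CommSemiring R] [Semiring B] [Algebra R B]
    (u : X → FreeAlgebra R Y) (v : Y → B) (f : FreeAlgebra R X) :
    FreeAlgebra.lift R v (FreeAlgebra.lift R u f) =
      FreeAlgebra.lift R (fun x => FreeAlgebra.lift R v (u x)) f := by
  rw [← AlgHom.comp_apply]
  congr 1
  ext x
  simp

def ordMonomial (n : ℕ) (σ : Equiv.Perm (Fin n)) : FreeAlgebra F ℕ :=
  (List.ofFn fun j : Fin n => FreeAlgebra.ι F (σ j : ℕ)).prod

def sumSubst [Fintype G] : FreeAlgebra F ℕ →ₐ[F] FreeAlgebra F (ℕ × G) :=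
  FreeAlgebra.lift F fun i => ∑ g : G, FreeAlgebra.ι F (i, g)

/-- Variables beyond `x_n` get degree `1`; this is irrelevant on `P_n`. -/
def degreeSubst [One G] {n : ℕ} (t : Fin n → G) : FreeAlgebra F ℕ →ₐ[F] FreeAlgebra F (ℕ × G) :=
  FreeAlgebra.lift F fun i => FreeAlgebra.ι F (i, if h : i < n then t ⟨i, h⟩ else 1)

variable {F G}

lemma Pn_eq_span_range (n : ℕ) : Pn F n = Submodule.span F (Set.range (ordMonomial F n)) := by
  simp only [Pn, ordMonomial, Set.range, eq_comm]

lemma PnG_eq_span_range (n : ℕ) :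
    PnG F G n = Submodule.span F (Set.range fun p : Equiv.Perm (Fin n) × (Fin n → G) =>
      gradedMonomial F G n p.1 p.2) := by
  simp only [PnG, Set.range, Prod.exists, eq_comm]

instance (n : ℕ) : Module.Finite F (Pn F n) := by
  rw [Pn_eq_span_range]
  exact Module.Finite.span_of_finite F (Set.finite_range _)

instance [Fintype G] (n : ℕ) : Module.Finite F (PnG F G n) := by
  rw [PnG_eq_span_range]
  exact Module.Finite.span_of_finite F (Set.finite_range _)

lemma sumSubst_ordMonomial [Fintype G] (n : ℕ) (σ : Equiv.Perm (Fin n)) :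
    sumSubst F G (ordMonomial F n σ) = ∑ gs : Fin n → G, gradedMonomial F G n σ gs := by
  simp only [ordMonomial, map_list_prod, List.map_ofFn, Function.comp_def, sumSubst,
    FreeAlgebra.lift_ι_apply]
  exact prod_ofFn_sum n fun j g => FreeAlgebra.ι F ((σ j : ℕ), g)

lemma degreeSubst_ordMonomial [One G] {n : ℕ} (t : Fin n → G) (σ : Equiv.Perm (Fin n)) :
    degreeSubst F G t (ordMonomial F n σ) = gradedMonomial F G n σ (t ∘ σ) := by
  simp [ordMonomial, gradedMonomial, map_list_prod, List.map_ofFn, Function.comp_def,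
    degreeSubst]

variable {A : Type} [Ring A] [Algebra F A] {𝒜 : G → Submodule F A}

lemma comap_sumSubst_gradedId [Fintype G] (h𝒜 : ⨆ g, 𝒜 g = ⊤) :
    (gradedId F G A 𝒜).comap (sumSubst F G).toLinearMap = ordId F A := by
  ext f
  have lift_sumSubst (v : ℕ × G → A) :
      FreeAlgebra.lift F v (sumSubst F G f) = FreeAlgebra.lift F (fun i => ∑ g, v (i, g)) f := by
    simp [sumSubst, lift_lift_apply]
  constructor
  · intro hf v
    have hv i : v i ∈ ⨆ g ∈ Finset.univ, 𝒜 g := by simp [h𝒜]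
    choose c hc using fun i => (Submodule.mem_iSup_finset_iff_exists_sum 𝒜 (v i)).1 (hv i)
    have := hf (fun p => c p.1 p.2) fun p => (c p.1 p.2).2
    rwa [AlgHom.toLinearMap_apply, lift_sumSubst, funext hc] at this
  · intro hf v _
    simpa [lift_sumSubst] using hf _

lemma ordId_le_comap_degreeSubst [One G] {n : ℕ} (t : Fin n → G) :
    ordId F A ≤ (gradedId F G A 𝒜).comap (degreeSubst F G t).toLinearMap := by
  intro f hf v _
  simpa [degreeSubst, lift_lift_apply] using hf _

lemma map_sumSubst_Pn_le [Fintype G] (n : ℕ) :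
    (Pn F n).map (sumSubst F G).toLinearMap ≤ PnG F G n := by
  rw [Pn_eq_span_range, Submodule.map_span, Submodule.span_le]
  rintro _ ⟨_, ⟨σ, rfl⟩, rfl⟩
  rw [AlgHom.toLinearMap_apply, sumSubst_ordMonomial]
  exact Submodule.sum_mem _ fun gs _ => Submodule.subset_span ⟨σ, gs, rfl⟩

lemma PnG_eq_iSup_map_degreeSubst [One G] (n : ℕ) :
    PnG F G n = ⨆ t : Fin n → G, (Pn F n).map (degreeSubst F G t).toLinearMap := by
  apply le_antisymm
  · rw [PnG, Submodule.span_le]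
    rintro _ ⟨σ, gs, rfl⟩
    apply Submodule.mem_iSup_of_mem (gs ∘ σ.symm)
    have := Submodule.mem_map_of_mem (f := (degreeSubst F G (gs ∘ σ.symm)).toLinearMap)
      (Submodule.subset_span ⟨σ, rfl⟩ : ordMonomial F n σ ∈ Pn F n)
    rwa [AlgHom.toLinearMap_apply, degreeSubst_ordMonomial, Function.comp_assoc,
      Equiv.symm_comp_self, Function.comp_id] at this
  · refine iSup_le fun t => ?_
    rw [Pn_eq_span_range, Submodule.map_span, Submodule.span_le]
    rintro _ ⟨_, ⟨σ, rfl⟩, rfl⟩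
    rw [SetLike.mem_coe, AlgHom.toLinearMap_apply, degreeSubst_ordMonomial]
    exact Submodule.subset_span ⟨σ, t ∘ σ, rfl⟩

lemma ordCodim_le_gradedCodim [Fintype G] (h𝒜 : ⨆ g, 𝒜 g = ⊤) (n : ℕ) :
    ordCodim F A n ≤ gradedCodim F G A 𝒜 n :=
  finrank_map_mkQ_le_of_comap_eq _ (comap_sumSubst_gradedId h𝒜) (map_sumSubst_Pn_le n)

lemma gradedCodim_le_card_pow_mul [One G] [Fintype G] (n : ℕ) :
    gradedCodim F G A 𝒜 n ≤ Fintype.card G ^ n * ordCodim F A n := by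
  calc gradedCodim F G A 𝒜 n
      = finrank F ↥(⨆ t : Fin n → G,
          ((Pn F n).map (degreeSubst F G t).toLinearMap).map (gradedId F G A 𝒜).mkQ) := by
        rw [gradedCodim, PnG_eq_iSup_map_degreeSubst, Submodule.map_iSup]
    _ ≤ ∑ t : Fin n → G,
          finrank F (((Pn F n).map (degreeSubst F G t).toLinearMap).map (gradedId F G A 𝒜).mkQ) :=
        finrank_iSup_le_sum _
    _ ≤ ∑ _t : Fin n → G, ordCodim F A n :=
        Finset.sum_le_sum fun t _ => finrank_map_mkQ_map_le _ (ordId_le_comap_degreeSubst t) _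
    _ = Fintype.card G ^ n * ordCodim F A n := by simp

theorem graded_codim_le_card_pow_mul_ordCodim_general
    (F : Type) [Field F]
    (G : Type) [CommGroup G] [Fintype G] [DecidableEq G]
    (A : Type) [Ring A] [Algebra F A]
    (𝒜 : G → Submodule F A) (hgr : IsGrading F G A 𝒜) :
    ∀ n : ℕ, 1 ≤ n →
      ordCodim F A n ≤ gradedCodim F G A 𝒜 n ∧
      gradedCodim F G A 𝒜 n ≤ (Fintype.card G) ^ n * ordCodim F A n := fun n _ =>
  ⟨ordCodim_le_gradedCodim hgr.internal.submodule_iSup_eq_top n, gradedCodim_le_card_pow_mul n⟩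

/-- If `A` is a `G`-graded algebra satisfying an ordinary polynomial
identity, then `c_n(A) ≤ c_n^G(A) ≤ |G|^n ⬝ c_n(A)` for all `n ≥ 1`. -/
theorem graded_codim_le_card_pow_mul_ordCodim
    (F : Type) [Field F] [CharZero F]
    (G : Type) [CommGroup G] [Fintype G] [DecidableEq G]
    (A : Type) [Ring A] [Algebra F A]
    (𝒜 : G → Submodule F A) (hgr : IsGrading F G A 𝒜)
    (hPI : ∃ p : FreeAlgebra F ℕ, p ≠ 0 ∧ p ∈ ordId F A) :
    ∀ n : ℕ, 1 ≤ n →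
      ordCodim F A n ≤ gradedCodim F G A 𝒜 n ∧
      gradedCodim F G A 𝒜 n ≤ (Fintype.card G) ^ n * ordCodim F A n :=
  graded_codim_le_card_pow_mul_ordCodim_general F G A 𝒜 hgr

end GrPI
end
end

section
/- Let H be a finite abelian group, F an algebraically closed field of characteristic zero, f a 2-cocycle on H with values in F*, and α_f(h_1,h_2) = f(h_1,h_2)f(h_2,h_1)^{-1}. Suppose α_f is non-degenerate, i.e., for every h ≠ 1 in H there exists h' ∈ H with α_f(h,h') ≠ 1. Then the center of the twisted group algebra F^f H is one-dimensional; consequently F^f H is isomorphic to the matrix algebra M_r(F) with r² = |H|. -/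
/-!
With respect to the basis `u`, the commutator `x * u h - u h * x` has coefficient
`(f g h - f h g) * x_g` at `h * g`. By non-degeneracy of `α_f`, an element commuting with every
`u h` is therefore supported on `1`, i.e. lies in `F • u 1 = F • 1`: the centre is `F`.
The same formula gives simplicity: in a nonzero two-sided ideal pick `x` of minimal support,
translated by some `u h` so that `x_1 ≠ 0`. Its commutators with the `u h` lie in the ideal and
have smaller support (the coefficient at `h` vanishes since `f 1 h = f h 1`), so they are zero;
thus `x` is a nonzero scalar and the ideal contains `1`. Wedderburn–Artin over the algebraically
closed field `F` then gives `B ≃ M_r(F)`, and comparing dimensions gives `r ^ 2 = |H|`.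
-/

/-- `f : H × H → Fˣ` is a 2-cocycle (trivial action). -/
def IsTwoCocycle {H F : Type*} [CommGroup H] [Field F] (f : H → H → Fˣ) : Prop :=
  ∀ h₁ h₂ h₃ : H, f h₁ h₂ * f (h₁ * h₂) h₃ = f h₂ h₃ * f h₁ (h₂ * h₃)

/-- The alternating bicharacter `α_f(h₁,h₂) = f(h₁,h₂) ⬝ f(h₂,h₁)⁻¹` of a 2-cocycle. -/
def alphaOf {H F : Type*} [CommGroup H] [Field F] (f : H → H → Fˣ) : H → H → Fˣ :=
  fun h₁ h₂ => f h₁ h₂ * (f h₂ h₁)⁻¹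

/-- `B` is a twisted group algebra `F^f H`: it has a basis `u` indexed by `H` with
`u h₁ * u h₂ = f h₁ h₂ • u (h₁ h₂)`. -/
def IsTwistedGroupAlgebra {H F B : Type*} [CommGroup H] [Field F] [Ring B] [Algebra F B]
    (f : H → H → Fˣ) (u : Module.Basis H F B) : Prop :=
  ∀ h₁ h₂ : H, u h₁ * u h₂ = ((f h₁ h₂ : F)) • u (h₁ * h₂)

namespace IsTwoCocycle

variable {H F : Type*} [CommGroup H] [Field F] {f : H → H → Fˣ}

theorem apply_one_left (hf : IsTwoCocycle f) (h : H) : f 1 h = f 1 1 := by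
  have := hf 1 1 h
  simp only [one_mul] at this
  exact (mul_right_cancel this).symm

theorem apply_one_right (hf : IsTwoCocycle f) (h : H) : f h 1 = f 1 1 := by
  have := hf h 1 1
  simp only [mul_one] at this
  exact mul_right_cancel this

end IsTwoCocycle

namespace IsTwistedGroupAlgebra

variable {F H B : Type*} [Field F] [CommGroup H] [Ring B] [Algebra F B]
  {f : H → H → Fˣ} {u : Module.Basis H F B}

open Finset

theorem repr_basis_mul (hu : IsTwistedGroupAlgebra f u) (h k : H) (x : B) :
    u.repr (u h * x) (h * k) = f h k * u.repr x k := by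
  have : Finsupp.lapply (h * k) ∘ₗ u.repr.toLinearMap ∘ₗ LinearMap.mulLeft F (u h) =
      (f h k : F) • (Finsupp.lapply k ∘ₗ u.repr.toLinearMap) := by
    refine u.ext fun g => ?_
    rcases eq_or_ne g k with rfl | hgk <;> simp [hu h g, *]
  simpa using LinearMap.congr_fun this x

theorem repr_mul_basis (hu : IsTwistedGroupAlgebra f u) (h k : H) (x : B) :
    u.repr (x * u h) (k * h) = f k h * u.repr x k := by
  have : Finsupp.lapply (k * h) ∘ₗ u.repr.toLinearMap ∘ₗ LinearMap.mulRight F (u h) =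
      (f k h : F) • (Finsupp.lapply k ∘ₗ u.repr.toLinearMap) := by
    refine u.ext fun g => ?_
    rcases eq_or_ne g k with rfl | hgk <;> simp [hu g h, *]
  simpa using LinearMap.congr_fun this x

theorem repr_commutator_basis (hu : IsTwistedGroupAlgebra f u) (h k : H) (x : B) :
    u.repr (x * u h - u h * x) (h * k) = ((f k h : F) - f h k) * u.repr x k := by
  rw [map_sub, Finsupp.sub_apply, hu.repr_basis_mul, mul_comm h k, hu.repr_mul_basis, sub_mul]

theorem basis_one (hu : IsTwistedGroupAlgebra f u) (hf : IsTwoCocycle f) :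
    u 1 = (f 1 1 : F) • 1 := by
  have hc : (f 1 1 : F) ≠ 0 := (f 1 1).ne_zero
  have hmul : LinearMap.mulLeft F ((f 1 1 : F)⁻¹ • u 1) = LinearMap.id := by
    refine u.ext fun h => ?_
    simp [hu 1 h, hf.apply_one_left h, smul_smul, hc]
  have := LinearMap.congr_fun hmul 1
  simp only [LinearMap.mulLeft_apply, mul_one, LinearMap.id_apply] at this
  rw [← this, smul_smul, mul_inv_cancel₀ hc, one_smul]

theorem repr_eq_zero_of_forall_commute (hu : IsTwistedGroupAlgebra f u)
    (hnd : ∀ h : H, h ≠ 1 → ∃ h' : H, alphaOf f h h' ≠ 1) {x : B}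
    (hx : ∀ h, x * u h = u h * x) {g : H} (hg : g ≠ 1) : u.repr x g = 0 := by
  obtain ⟨h, hα⟩ := hnd g hg
  have hfgh : (f g h : F) - f h g ≠ 0 :=
    sub_ne_zero.mpr fun hc => hα (mul_inv_eq_one.mpr (Units.ext hc))
  have := hu.repr_commutator_basis h g x
  rw [hx h, sub_self, map_zero, Finsupp.zero_apply, eq_comm, mul_eq_zero] at this
  exact this.resolve_left hfgh

theorem mem_bot_of_forall_commute (hu : IsTwistedGroupAlgebra f u) (hf : IsTwoCocycle f)
    (hnd : ∀ h : H, h ≠ 1 → ∃ h' : H, alphaOf f h h' ≠ 1) {x : B}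
    (hx : ∀ h, x * u h = u h * x) : x ∈ (⊥ : Subalgebra F B) := by
  have hrepr : u.repr x = Finsupp.single 1 (u.repr x 1) := by
    ext g
    rcases eq_or_ne g 1 with rfl | hg
    · simp
    · rw [hu.repr_eq_zero_of_forall_commute hnd hx hg, Finsupp.single_eq_of_ne hg]
  rw [← u.repr.symm_apply_apply x, hrepr, Module.Basis.repr_symm_single, hu.basis_one hf,
    smul_smul, Algebra.mem_bot]
  exact ⟨_, Algebra.algebraMap_eq_smul_one _⟩

theorem center_eq_bot (hu : IsTwistedGroupAlgebra f u) (hf : IsTwoCocycle f)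
    (hnd : ∀ h : H, h ≠ 1 → ∃ h' : H, alphaOf f h h' ≠ 1) :
    Subalgebra.center F B = ⊥ :=
  le_bot_iff.mp fun _ hx =>
    hu.mem_bot_of_forall_commute hf hnd fun h => (Subalgebra.mem_center_iff.mp hx (u h)).symm

theorem card_support_basis_mul_le (hu : IsTwistedGroupAlgebra f u) (h : H) (x : B) :
    #(u.repr (u h * x)).support ≤ #(u.repr x).support := by
  classical
  calc #(u.repr (u h * x)).support ≤ #((u.repr x).support.image (h * ·)) := by
        refine card_le_card fun g hg => ?_
        rw [Finsupp.mem_support_iff, ← mul_inv_cancel_left h g, hu.repr_basis_mul] at hg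
        exact mem_image.mpr ⟨h⁻¹ * g, Finsupp.mem_support_iff.mpr (right_ne_zero_of_mul hg),
          mul_inv_cancel_left h g⟩
    _ ≤ #(u.repr x).support := card_image_le

theorem card_support_commutator_basis_lt (hu : IsTwistedGroupAlgebra f u) (hf : IsTwoCocycle f)
    (h : H) {x : B} (hx : u.repr x 1 ≠ 0) :
    #(u.repr (x * u h - u h * x)).support < #(u.repr x).support := by
  classical
  calc #(u.repr (x * u h - u h * x)).support
        ≤ #(((u.repr x).support.erase 1).image (h * ·)) := by
        refine card_le_card fun g hg => ?_
        rw [Finsupp.mem_support_iff, ← mul_inv_cancel_left h g, hu.repr_commutator_basis] at hg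
        refine mem_image.mpr ⟨h⁻¹ * g, mem_erase.mpr ⟨fun h1 => hg ?_,
          Finsupp.mem_support_iff.mpr (right_ne_zero_of_mul hg)⟩, mul_inv_cancel_left h g⟩
        rw [h1, hf.apply_one_left, hf.apply_one_right h, sub_self, zero_mul]
    _ ≤ #((u.repr x).support.erase 1) := card_image_le
    _ < #(u.repr x).support := card_erase_lt_of_mem (Finsupp.mem_support_iff.mpr hx)

theorem one_mem_of_mem_of_ne_zero (hu : IsTwistedGroupAlgebra f u) (hf : IsTwoCocycle f)
    (hnd : ∀ h : H, h ≠ 1 → ∃ h' : H, alphaOf f h h' ≠ 1) (I : TwoSidedIdeal B) {x : B}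
    (hxI : x ∈ I) (hx : x ≠ 0) : (1 : B) ∈ I := by
  induction hn : #(u.repr x).support using Nat.strong_induction_on generalizing x with
  | _ n ih =>
  obtain ⟨h, hh⟩ : ∃ h, u.repr x h ≠ 0 := by
    by_contra! h0
    exact hx (u.repr.map_eq_zero_iff.mp (Finsupp.ext h0))
  set y := u h⁻¹ * x
  have hyI : y ∈ I := I.mul_mem_left _ _ hxI
  have hy1 : u.repr y 1 ≠ 0 := by
    rw [← inv_mul_cancel h, hu.repr_basis_mul]
    exact mul_ne_zero (f _ _).ne_zero hh
  by_cases hcomm : ∀ k, y * u k = u k * y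
  · obtain ⟨c, hc⟩ := Algebra.mem_bot.mp (hu.mem_bot_of_forall_commute hf hnd hcomm)
    have hc0 : c ≠ 0 := by
      rintro rfl
      simp [← hc] at hy1
    have hone : (1 : B) = algebraMap F B c⁻¹ * y := by
      rw [← hc, ← map_mul, inv_mul_cancel₀ hc0, map_one]
    exact hone ▸ I.mul_mem_left _ _ hyI
  · obtain ⟨k, hk⟩ := not_forall.mp hcomm
    refine ih _ ?_ (I.sub_mem (I.mul_mem_right _ _ hyI) (I.mul_mem_left _ _ hyI))
      (sub_ne_zero.mpr hk) rfl
    exact hn ▸ (hu.card_support_commutator_basis_lt hf k hy1).trans_le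
      (hu.card_support_basis_mul_le _ x)

theorem isSimpleRing (hu : IsTwistedGroupAlgebra f u) (hf : IsTwoCocycle f)
    (hnd : ∀ h : H, h ≠ 1 → ∃ h' : H, alphaOf f h h' ≠ 1) : IsSimpleRing B := by
  have : Nontrivial B := ⟨⟨u 1, 0, u.ne_zero 1⟩⟩
  refine .of_eq_bot_or_eq_top fun I => or_iff_not_imp_left.mpr fun hI => ?_
  obtain ⟨x, hxI, hx⟩ := SetLike.exists_of_lt (bot_lt_iff_ne_bot.mpr hI)
  exact I.eq_top (hu.one_mem_of_mem_of_ne_zero hf hnd I hxI (by simpa using hx))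

end IsTwistedGroupAlgebra

theorem twisted_group_algebra_nondegenerate_simple_general
    (F : Type*) [Field F] [IsAlgClosed F]
    (H : Type*) [CommGroup H] [Fintype H]
    (f : H → H → Fˣ) (hf : IsTwoCocycle f)
    (B : Type*) [Ring B] [Algebra F B] (u : Module.Basis H F B)
    (hu : IsTwistedGroupAlgebra f u)
    (hnd : ∀ h : H, h ≠ 1 → ∃ h' : H, alphaOf f h h' ≠ 1) :
    Module.finrank F (Subalgebra.center F B) = 1 ∧
    ∃ r : ℕ, r ^ 2 = Fintype.card H ∧
      Nonempty (B ≃ₐ[F] Matrix (Fin r) (Fin r) F) := by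
  have := Module.Finite.of_basis u
  have := hu.isSimpleRing hf hnd
  refine ⟨by rw [hu.center_eq_bot hf hnd, Subalgebra.finrank_bot], ?_⟩
  obtain ⟨r, -, ⟨e⟩⟩ := IsSimpleRing.exists_algEquiv_matrix_of_isAlgClosed F B
  refine ⟨r, ?_, ⟨e⟩⟩
  rw [← Module.finrank_eq_card_basis u, e.toLinearEquiv.finrank_eq, Module.finrank_matrix,
    Fintype.card_fin, Module.finrank_self, mul_one, sq]

/-- If `α_f` is non-degenerate, then the twisted group algebra `F^f H`
has one-dimensional center, and hence `F^f H ≅ M_r(F)` with `r² = |H|`. -/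
theorem twisted_group_algebra_nondegenerate_simple
    (F : Type*) [Field F] [IsAlgClosed F] [CharZero F]
    (H : Type*) [CommGroup H] [Fintype H]
    (f : H → H → Fˣ) (hf : IsTwoCocycle f)
    (B : Type*) [Ring B] [Algebra F B] (u : Module.Basis H F B)
    (hu : IsTwistedGroupAlgebra f u)
    (hnd : ∀ h : H, h ≠ 1 → ∃ h' : H, alphaOf f h h' ≠ 1) :
    Module.finrank F (Subalgebra.center F B) = 1 ∧
    ∃ r : ℕ, r ^ 2 = Fintype.card H ∧
      Nonempty (B ≃ₐ[F] Matrix (Fin r) (Fin r) F) :=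
  twisted_group_algebra_nondegenerate_simple_general F H f hf B u hu hnd
end

section
/- There exist constants C > 0 and β such that for all m, if ν is the rectangular partition ((2m-l)^p) of (2m-l)p (p rows of length 2m-l, l a fixed constant), then the degree of the irreducible S_{(2m-l)p}-character χ_ν satisfies deg χ_ν ≥ C ((2m-l)p)^β p^{(2m-l)p} as m → ∞; equivalently deg χ_ν ≍ a p^{(2m-l)p} ((2m-l)p)^b for constants a, b. -/
/-- The degree of the irreducible character `χ_ν` of `S_{pq}` associated to the
rectangular partition `ν = (q^p)` (`p` rows of length `q`), computed via the hook
length formula: the hook of the cell `(i, j)` (0-indexed) is `p + q - i - j - 1`. -/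
noncomputable def degRect (p q : ℕ) : ℝ :=
  ((p * q).factorial : ℝ) /
    ∏ i : Fin p, ∏ j : Fin q, ((p + q - (i : ℕ) - (j : ℕ) - 1 : ℕ) : ℝ)

/-!
Row `i` of the `p × q` rectangle has hook lengths `q + (p - 1 - i), …, p - i`, whose product is
`q! * C(q + p - 1 - i, q)`; hence `deg χ_ν = (pq)! / (q!^p * ∏_{i<p} C(q + i, q))`. For fixed `p`
the binomial factor lies between `1` and `(p + q)^{p²}`, a polynomial in `pq`, and the elementary
Stirling bounds `(n/e)^n ≤ n! ≤ e n (n/e)^n` show that the multinomial coefficient `(pq)! / q!^p`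
is `p^{pq}` up to factors polynomial in `pq`.
-/

open Real Finset
open scoped Nat

lemma prod_fin_sub_eq_factorial_mul_choose (q a : ℕ) :
    ∏ j : Fin q, (q + a - j) = q ! * (q + a).choose q := by
  rw [Fin.prod_univ_eq_prod_range (fun j => q + a - j), ← Nat.descFactorial_eq_prod_range,
    Nat.descFactorial_eq_factorial_mul_choose]

lemma degRect_eq (p q : ℕ) :
    degRect p q = ((p * q) ! : ℝ) / (q ! ^ p * ∏ i : Fin p, (q + i).choose q : ℕ) := by
  have hrow (i : Fin p) :
      ∏ j : Fin q, (p + q - i - j - 1) = q ! * (q + i.rev).choose q := by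
    rw [← prod_fin_sub_eq_factorial_mul_choose, Fin.val_rev]
    exact prod_congr rfl fun j _ => by omega
  simp only [degRect, ← Nat.cast_prod, prod_congr rfl fun i _ => hrow i, prod_mul_distrib,
    prod_const, Finset.card_fin, ← Fin.revPerm_apply, Equiv.prod_comp Fin.revPerm
      (fun i : Fin p => (q + i).choose q)]

lemma prod_add_choose_pos (p q : ℕ) : 0 < ∏ i : Fin p, (q + i).choose q :=
  prod_pos fun _ _ => Nat.choose_pos (Nat.le_add_right q _)

lemma prod_add_choose_le (p q : ℕ) : ∏ i : Fin p, (q + i).choose q ≤ (p + q) ^ (p ^ 2) := by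
  rw [sq, pow_mul]
  refine (prod_le_pow_card _ _ ((p + q) ^ p) fun i _ => ?_).trans_eq (by rw [Finset.card_fin])
  rw [Nat.choose_symm_add]
  calc (q + i).choose i ≤ (q + i) ^ (i : ℕ) := Nat.choose_le_pow _ _
    _ ≤ (p + q) ^ (i : ℕ) := Nat.pow_le_pow_left (by omega) _
    _ ≤ (p + q) ^ p := Nat.pow_le_pow_right (by have := i.pos; omega) i.is_lt.le

lemma pow_div_exp_one_le_factorial (n : ℕ) : ((n : ℝ) / exp 1) ^ n ≤ n ! := by
  have := Real.pow_div_factorial_le_exp (n : ℝ) (Nat.cast_nonneg n) n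
  rw [div_le_iff₀ (by positivity), ← Real.exp_one_pow] at this
  rw [div_pow, div_le_iff₀ (by positivity)]
  linarith

lemma factorial_le_exp_one_mul_pow {n : ℕ} (hn : n ≠ 0) :
    (n ! : ℝ) ≤ exp 1 * n * ((n : ℝ) / exp 1) ^ n := by
  have hS : Stirling.stirlingSeq n ≤ exp 1 / √2 := by
    obtain ⟨k, rfl⟩ := Nat.exists_eq_succ_of_ne_zero hn
    simpa using Stirling.stirlingSeq'_antitone (Nat.zero_le k)
  rw [Stirling.stirlingSeq, div_le_iff₀ (by positivity)] at hS
  have hsqrt : √(n : ℝ) ≤ n :=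
    Real.sqrt_le_self_iff.mpr (.inr (by exact_mod_cast Nat.one_le_iff_ne_zero.mpr hn))
  calc (n ! : ℝ) ≤ exp 1 / √2 * (√(2 * n) * (n / exp 1) ^ n) := hS
    _ = exp 1 * √n * (n / exp 1) ^ n := by
      rw [Real.sqrt_mul zero_le_two]; field_simp
    _ ≤ exp 1 * n * ((n : ℝ) / exp 1) ^ n := by gcongr

lemma factorial_mul_le_pow_mul_factorial_pow {p q : ℕ} (h : p * q ≠ 0) :
    ((p * q)! : ℝ) ≤ exp 1 * (p * q : ℕ) * p ^ (p * q) * (q ! : ℝ) ^ p := by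
  calc ((p * q)! : ℝ) ≤ exp 1 * (p * q : ℕ) * ((p * q : ℕ) / exp 1) ^ (p * q) :=
        factorial_le_exp_one_mul_pow h
    _ = exp 1 * (p * q : ℕ) * p ^ (p * q) * (((q : ℝ) / exp 1) ^ q) ^ p := by
      rw [Nat.cast_mul, mul_div_assoc, mul_pow, pow_mul' (_ / _) p q]; ring
    _ ≤ exp 1 * (p * q : ℕ) * p ^ (p * q) * (q ! : ℝ) ^ p := by
      gcongr; exact pow_div_exp_one_le_factorial q

lemma pow_mul_factorial_pow_le_factorial_mul {p q : ℕ} (hq : q ≠ 0) :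
    (p : ℝ) ^ (p * q) * (q ! : ℝ) ^ p ≤ exp 1 ^ p * q ^ p * (p * q)! := by
  calc (p : ℝ) ^ (p * q) * (q ! : ℝ) ^ p
      ≤ p ^ (p * q) * (exp 1 * q * ((q : ℝ) / exp 1) ^ q) ^ p := by
        gcongr; exact factorial_le_exp_one_mul_pow hq
    _ = exp 1 ^ p * q ^ p * ((p * q : ℕ) / exp 1) ^ (p * q) := by
      rw [Nat.cast_mul, mul_div_assoc, mul_pow _ (_ / _), pow_mul' (_ / _) p q]; ring
    _ ≤ exp 1 ^ p * q ^ p * (p * q)! := by gcongr; exact pow_div_exp_one_le_factorial _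

lemma degRect_le {p q : ℕ} (h : p * q ≠ 0) :
    degRect p q ≤ exp 1 * (p * q : ℕ) * p ^ (p * q) := by
  have hchoose := prod_add_choose_pos p q
  rw [degRect_eq, div_le_iff₀ (by positivity), Nat.cast_mul (q ! ^ p), Nat.cast_pow, ← mul_assoc]
  calc ((p * q)! : ℝ) ≤ exp 1 * (p * q : ℕ) * p ^ (p * q) * (q ! : ℝ) ^ p := factorial_mul_le_pow_mul_factorial_pow h
    _ ≤ _ := le_mul_of_one_le_right (by positivity) (Nat.one_le_cast.mpr hchoose)

lemma le_degRect {p q : ℕ} (hp : p ≠ 0) (hq : q ≠ 0) :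
    (p : ℝ) ^ (p * q) / (exp 1 ^ p * 2 ^ (p ^ 2) * (p * q : ℕ) ^ (p + p ^ 2)) ≤ degRect p q := by
  have hsum : p + q ≤ 2 * (p * q) := by
    have := Nat.pos_of_ne_zero hp
    have := Nat.pos_of_ne_zero hq
    nlinarith
  have hchoose : (∏ i : Fin p, (q + i).choose q : ℝ) ≤ (2 * (p * q : ℕ)) ^ (p ^ 2) := by
    exact_mod_cast (prod_add_choose_le p q).trans (Nat.pow_le_pow_left hsum _)
  have hqN : (q : ℝ) ≤ (p * q : ℕ) := by
    exact_mod_cast Nat.le_mul_of_pos_left q (Nat.pos_of_ne_zero hp)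
  have hchoose_pos := prod_add_choose_pos p q
  rw [degRect_eq, div_le_div_iff₀ (by positivity) (by positivity)]
  push_cast
  calc (p : ℝ) ^ (p * q) * ((q ! : ℝ) ^ p * ∏ i : Fin p, ((q + i).choose q : ℝ))
      ≤ (p : ℝ) ^ (p * q) * (q ! : ℝ) ^ p * (2 * (p * q : ℕ)) ^ (p ^ 2) := by
        rw [← mul_assoc]; gcongr
    _ ≤ exp 1 ^ p * q ^ p * (p * q)! * (2 * (p * q : ℕ)) ^ (p ^ 2) :=
        mul_le_mul_of_nonneg_right (pow_mul_factorial_pow_le_factorial_mul hq) (by positivity)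
    _ ≤ exp 1 ^ p * (p * q : ℕ) ^ p * (p * q)! * (2 * (p * q : ℕ)) ^ (p ^ 2) := by gcongr
    _ = _ := by push_cast; ring

/-- (Regev's asymptotics.)  For fixed `p, l`, the degree of the
irreducible `S_{(2m-l)p}`-character of the rectangular partition `((2m-l)^p)` satisfies
`deg χ_ν ≍ a p^{(2m-l)p} ((2m-l)p)^b` as `m → ∞`; in particular there are constants
`C > 0` and `β` with `deg χ_ν ≥ C ((2m-l)p)^β p^{(2m-l)p}` for all large `m`. -/
theorem rectangular_character_degree_asymptotics (p l : ℕ) (hp : 0 < p) :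
    ∃ C₁ C₂ β₁ β₂ : ℝ, 0 < C₁ ∧ 0 < C₂ ∧
      ∀ᶠ m : ℕ in Filter.atTop,
        C₁ * (((2 * m - l) * p : ℕ) : ℝ) ^ (β₁ : ℝ) * (p : ℝ) ^ ((2 * m - l) * p) ≤
          degRect p (2 * m - l) ∧
        degRect p (2 * m - l) ≤
          C₂ * (((2 * m - l) * p : ℕ) : ℝ) ^ (β₂ : ℝ) * (p : ℝ) ^ ((2 * m - l) * p) := by
  refine ⟨(exp 1 ^ p * 2 ^ (p ^ 2))⁻¹, exp 1, -((p + p ^ 2 : ℕ) : ℝ), 1, by positivity,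
    exp_pos 1, ?_⟩
  filter_upwards [Filter.eventually_gt_atTop l] with m hm
  have hq : 2 * m - l ≠ 0 := by omega
  rw [Nat.mul_comm _ p, Real.rpow_neg (Nat.cast_nonneg _), Real.rpow_natCast, Real.rpow_one]
  refine ⟨le_of_eq_of_le ?_ (le_degRect hp.ne' hq), degRect_le (by positivity)⟩
  rw [div_eq_mul_inv, mul_inv]
  ring
end
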